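/- arXiv:1404.6330 — 4 statements merged into one kernel-verified Lean document; each statement's English description precedes it below -/
import Mathlib

section
/- With the notation of the previous statement, the seminorm N(d₁,d₂) = (1/ε)·‖π(d₁) − ρ(d₂)‖ on the self-adjoint part of D₁ ⊕ D₂ satisfies the Leibniz inequality for the Jordan product: N({(d₁,d₂)},{(e₁,e₂)}) ≤ ‖(d₁,d₂)‖·N(e₁,e₂) + ‖(e₁,e₂)‖·N(d₁,d₂), where {a,b} = (ab+ba)/2, and similarly for the Lie product [a,b] = (ab−ba)/(2i). -/
lemma mul_diff_bound {B : Type*} [NormedRing B] (x y a b : B) :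
    ‖x * y - a * b‖ ≤ ‖x‖ * ‖y - b‖ + ‖x - a‖ * ‖b‖ := by
  have h : x * y - a * b = x * (y - b) + (x - a) * b := by noncomm_ring
  rw [h]
  calc ‖x * (y - b) + (x - a) * b‖ ≤ ‖x * (y - b)‖ + ‖(x - a) * b‖ := norm_add_le _ _
    _ ≤ ‖x‖ * ‖y - b‖ + ‖x - a‖ * ‖b‖ := by
        gcongr <;> [exact norm_mul_le _ _; exact norm_mul_le _ _]

/-- the coupling seminorm N satisfies the Leibniz inequality for the
Jordan product {a,b} = (ab+ba)/2 and the Lie product [a,b] = (ab-ba)/(2i) of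
self-adjoint elements of D₁ ⊕ D₂ (with the maximum norm). -/
theorem stmt3 {D₁ D₂ B : Type*}
    [NormedRing D₁] [StarRing D₁] [NormedAlgebra ℂ D₁]
    [NormedRing D₂] [StarRing D₂] [NormedAlgebra ℂ D₂]
    [NormedRing B] [StarRing B] [NormedAlgebra ℂ B]
    (π : D₁ →⋆ₐ[ℂ] B) (ρ : D₂ →⋆ₐ[ℂ] B)
    (hπ : ∀ x, ‖π x‖ ≤ ‖x‖) (hρ : ∀ x, ‖ρ x‖ ≤ ‖x‖)
    (ε : ℝ) (hε : 0 < ε)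
    (N : D₁ → D₂ → ℝ) (hN : ∀ d₁ d₂, N d₁ d₂ = ε⁻¹ * ‖π d₁ - ρ d₂‖) :
    ∀ (d₁ e₁ : D₁) (d₂ e₂ : D₂),
      IsSelfAdjoint d₁ → IsSelfAdjoint e₁ → IsSelfAdjoint d₂ → IsSelfAdjoint e₂ →
      (N ((2:ℂ)⁻¹ • (d₁ * e₁ + e₁ * d₁)) ((2:ℂ)⁻¹ • (d₂ * e₂ + e₂ * d₂)) ≤
        max ‖d₁‖ ‖d₂‖ * N e₁ e₂ + max ‖e₁‖ ‖e₂‖ * N d₁ d₂) ∧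
      (N ((2 * Complex.I)⁻¹ • (d₁ * e₁ - e₁ * d₁))
          ((2 * Complex.I)⁻¹ • (d₂ * e₂ - e₂ * d₂)) ≤
        max ‖d₁‖ ‖d₂‖ * N e₁ e₂ + max ‖e₁‖ ‖e₂‖ * N d₁ d₂) := by
  intro d₁ e₁ d₂ e₂ _ _ _ _
  set A := π e₁ - ρ e₂ with hA
  set Bd := π d₁ - ρ d₂ with hBd
  set M : ℝ := max ‖d₁‖ ‖d₂‖ * ‖A‖ + max ‖e₁‖ ‖e₂‖ * ‖Bd‖ with hM
  have h1 : ‖π d₁ * π e₁ - ρ d₂ * ρ e₂‖ ≤ M := by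
    calc ‖π d₁ * π e₁ - ρ d₂ * ρ e₂‖
        ≤ ‖π d₁‖ * ‖A‖ + ‖Bd‖ * ‖ρ e₂‖ := mul_diff_bound _ _ _ _
      _ ≤ max ‖d₁‖ ‖d₂‖ * ‖A‖ + ‖Bd‖ * max ‖e₁‖ ‖e₂‖ := by
          gcongr
          · exact (hπ d₁).trans (le_max_left _ _)
          · exact (hρ e₂).trans (le_max_right _ _)
      _ = M := by rw [hM]; ring
  have h2 : ‖π e₁ * π d₁ - ρ e₂ * ρ d₂‖ ≤ M := by
    calc ‖π e₁ * π d₁ - ρ e₂ * ρ d₂‖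
        ≤ ‖π e₁‖ * ‖Bd‖ + ‖A‖ * ‖ρ d₂‖ := mul_diff_bound _ _ _ _
      _ ≤ max ‖e₁‖ ‖e₂‖ * ‖Bd‖ + ‖A‖ * max ‖d₁‖ ‖d₂‖ := by
          gcongr
          · exact (hπ e₁).trans (le_max_left _ _)
          · exact (hρ d₂).trans (le_max_right _ _)
      _ = M := by rw [hM]; ring
  have hrhs : max ‖d₁‖ ‖d₂‖ * N e₁ e₂ + max ‖e₁‖ ‖e₂‖ * N d₁ d₂ = ε⁻¹ * M := by
    rw [hN, hN, hM]; ring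
  have hε' : (0:ℝ) ≤ ε⁻¹ := le_of_lt (inv_pos.mpr hε)
  constructor
  · rw [hN, hrhs]
    apply mul_le_mul_of_nonneg_left _ hε'
    have heq : π ((2:ℂ)⁻¹ • (d₁ * e₁ + e₁ * d₁)) - ρ ((2:ℂ)⁻¹ • (d₂ * e₂ + e₂ * d₂))
        = (2:ℂ)⁻¹ • ((π d₁ * π e₁ - ρ d₂ * ρ e₂) + (π e₁ * π d₁ - ρ e₂ * ρ d₂)) := by
      rw [map_smul, map_smul, map_add, map_add, map_mul, map_mul, map_mul, map_mul,
        ← smul_sub]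
      congr 1
      abel
    rw [heq, norm_smul]
    have hnorm : ‖(2:ℂ)⁻¹‖ = 2⁻¹ := by simp
    rw [hnorm]
    calc (2:ℝ)⁻¹ * ‖(π d₁ * π e₁ - ρ d₂ * ρ e₂) + (π e₁ * π d₁ - ρ e₂ * ρ d₂)‖
        ≤ (2:ℝ)⁻¹ * (M + M) := by
          apply mul_le_mul_of_nonneg_left _ (by norm_num)
          exact (norm_add_le _ _).trans (add_le_add h1 h2)
      _ = M := by ring
  · rw [hN, hrhs]
    apply mul_le_mul_of_nonneg_left _ hε'
    have heq : π ((2 * Complex.I)⁻¹ • (d₁ * e₁ - e₁ * d₁))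
        - ρ ((2 * Complex.I)⁻¹ • (d₂ * e₂ - e₂ * d₂))
        = (2 * Complex.I)⁻¹ • ((π d₁ * π e₁ - ρ d₂ * ρ e₂) - (π e₁ * π d₁ - ρ e₂ * ρ d₂)) := by
      rw [map_smul, map_smul, map_sub, map_sub, map_mul, map_mul, map_mul, map_mul,
        ← smul_sub]
      congr 1
      abel
    rw [heq, norm_smul]
    have hnorm : ‖(2 * Complex.I)⁻¹‖ = 2⁻¹ := by
      simp [norm_inv]
    rw [hnorm]
    calc (2:ℝ)⁻¹ * ‖(π d₁ * π e₁ - ρ d₂ * ρ e₂) - (π e₁ * π d₁ - ρ e₂ * ρ d₂)‖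
        ≤ (2:ℝ)⁻¹ * (M + M) := by
          apply mul_le_mul_of_nonneg_left _ (by norm_num)
          exact (norm_sub_le _ _).trans (add_le_add h1 h2)
      _ = M := by ring
end

section
/- Let V₁, V₂, W be real normed spaces, q₁ : V₁ → W and q₂ : V₂ → W bounded linear surjections, and L₁, L₂ extended seminorms on V₁, V₂ such that the quotient seminorm of L₁ under q₁ and of L₂ under q₂ both equal a given seminorm L_W on W (quotient seminorm of L under q is w ↦ inf{L(v) : q(v) = w}). Fix ε > 0 and define on V₁ × V₂ the seminorm L(v₁,v₂) = max(L₁(v₁), L₂(v₂), ε⁻¹·‖q₁(v₁) − q₂(v₂)‖). Then the quotient of L under the first projection (v₁,v₂) ↦ v₁ equals L₁, and the quotient under the second projection equals L₂. -/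
open scoped ENNReal

/-! Every `v₂` in the fibre of `q₂` over `q₁ v₁` makes the penalty term vanish, and since both
`L₁` and `L₂` induce `L_W` on `W`, such `v₂` can be chosen with `L₂ v₂ ≤ L₁ v₁ + δ` for every
`δ > 0`. The second projection is the first one with the roles of the factors swapped. -/

theorem iInf_max_max_eq_of_biInf_le {V : Type*} {a : ℝ≥0∞} {f g : V → ℝ≥0∞} {S : Set V}
    (hg : ∀ v ∈ S, g v = 0) (hf : ⨅ v ∈ S, f v ≤ a) :
    ⨅ v, max (max a (f v)) (g v) = a := by
  refine le_antisymm ?_ (le_iInf fun v => le_max_of_le_left (le_max_left _ _))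
  refine ENNReal.le_of_forall_pos_le_add fun δ hδ ha => ?_
  have hlt : ⨅ v ∈ S, f v < a + δ :=
    hf.trans_lt (ENNReal.lt_add_right ha.ne (by exact_mod_cast hδ.ne'))
  obtain ⟨v, hvS, hv⟩ : ∃ v ∈ S, f v < a + δ := by simpa only [iInf_lt_iff, exists_prop] using hlt
  refine iInf_le_of_le v ?_
  rw [hg v hvS]
  exact max_le (max_le le_self_add hv.le) zero_le

theorem biInf_fiber_le_of_quotient_eq {V₁ V₂ W : Type*} {q₁ : V₁ → W} {q₂ : V₂ → W}
    {L₁ : V₁ → ℝ≥0∞} {L₂ : V₂ → ℝ≥0∞} {LW : W → ℝ≥0∞}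
    (hq₁ : ∀ w, LW w = ⨅ v ∈ {v | q₁ v = w}, L₁ v)
    (hq₂ : ∀ w, LW w = ⨅ v ∈ {v | q₂ v = w}, L₂ v) (v₁ : V₁) :
    ⨅ v ∈ {v | q₂ v = q₁ v₁}, L₂ v ≤ L₁ v₁ := by
  rw [← hq₂, hq₁]
  exact biInf_le _ rfl

theorem iInf_coupling_eq_left {V₁ V₂ W : Type*} [SeminormedAddCommGroup W]
    {q₁ : V₁ → W} {q₂ : V₂ → W} {L₁ : V₁ → ℝ≥0∞} {L₂ : V₂ → ℝ≥0∞} {LW : W → ℝ≥0∞}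
    (hq₁ : ∀ w, LW w = ⨅ v ∈ {v | q₁ v = w}, L₁ v)
    (hq₂ : ∀ w, LW w = ⨅ v ∈ {v | q₂ v = w}, L₂ v) {ε : ℝ} {L : V₁ × V₂ → ℝ≥0∞}
    (hL : ∀ p : V₁ × V₂,
      L p = max (max (L₁ p.1) (L₂ p.2)) (ENNReal.ofReal (ε⁻¹ * ‖q₁ p.1 - q₂ p.2‖)))
    (v₁ : V₁) :
    ⨅ v₂, L (v₁, v₂) = L₁ v₁ := by
  simp only [hL]
  refine iInf_max_max_eq_of_biInf_le (fun v hv => ?_) (biInf_fiber_le_of_quotient_eq hq₁ hq₂ v₁)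
  rw [show q₂ v = q₁ v₁ from hv, sub_self, norm_zero, mul_zero, ENNReal.ofReal_zero]

theorem stmt9_general {V₁ V₂ W : Type*}
    [NormedAddCommGroup V₁] [NormedSpace ℝ V₁]
    [NormedAddCommGroup V₂] [NormedSpace ℝ V₂]
    [NormedAddCommGroup W] [NormedSpace ℝ W]
    (q₁ : V₁ →L[ℝ] W) (q₂ : V₂ →L[ℝ] W)
    (L₁ : V₁ → ℝ≥0∞) (L₂ : V₂ → ℝ≥0∞) (LW : W → ℝ≥0∞)
    (hq₁ : ∀ w : W, LW w = ⨅ v ∈ {v : V₁ | q₁ v = w}, L₁ v)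
    (hq₂ : ∀ w : W, LW w = ⨅ v ∈ {v : V₂ | q₂ v = w}, L₂ v)
    (ε : ℝ)
    (L : V₁ × V₂ → ℝ≥0∞)
    (hL : ∀ p : V₁ × V₂,
      L p = max (max (L₁ p.1) (L₂ p.2)) (ENNReal.ofReal (ε⁻¹ * ‖q₁ p.1 - q₂ p.2‖))) :
    (∀ v₁ : V₁, (⨅ v₂ : V₂, L (v₁, v₂)) = L₁ v₁) ∧
    (∀ v₂ : V₂, (⨅ v₁ : V₁, L (v₁, v₂)) = L₂ v₂) := by
  refine ⟨iInf_coupling_eq_left hq₁ hq₂ hL, iInf_coupling_eq_left (ε := ε) (L := fun p => L p.swap)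
    hq₂ hq₁ fun p => ?_⟩
  rw [hL, max_comm (L₁ _), norm_sub_rev]
  rfl

/-- the coupling seminorm
`L(v₁,v₂) = max(L₁ v₁, L₂ v₂, ε⁻¹‖q₁ v₁ − q₂ v₂‖)` has quotient `L₁` under the first
projection and quotient `L₂` under the second projection, when `L₁` and `L₂` both have
quotient `L_W` under `q₁` and `q₂` respectively. -/
theorem stmt9 {V₁ V₂ W : Type*}
    [NormedAddCommGroup V₁] [NormedSpace ℝ V₁]
    [NormedAddCommGroup V₂] [NormedSpace ℝ V₂]
    [NormedAddCommGroup W] [NormedSpace ℝ W]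
    (q₁ : V₁ →L[ℝ] W) (q₂ : V₂ →L[ℝ] W)
    (hq₁s : Function.Surjective q₁) (hq₂s : Function.Surjective q₂)
    (L₁ : V₁ → ℝ≥0∞) (L₂ : V₂ → ℝ≥0∞) (LW : W → ℝ≥0∞)
    (hq₁ : ∀ w : W, LW w = ⨅ v ∈ {v : V₁ | q₁ v = w}, L₁ v)
    (hq₂ : ∀ w : W, LW w = ⨅ v ∈ {v : V₂ | q₂ v = w}, L₂ v)
    (ε : ℝ) (hε : 0 < ε)
    (L : V₁ × V₂ → ℝ≥0∞)
    (hL : ∀ p : V₁ × V₂,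
      L p = max (max (L₁ p.1) (L₂ p.2)) (ENNReal.ofReal (ε⁻¹ * ‖q₁ p.1 - q₂ p.2‖))) :
    (∀ v₁ : V₁, (⨅ v₂ : V₂, L (v₁, v₂)) = L₁ v₁) ∧
    (∀ v₂ : V₂, (⨅ v₁ : V₁, L (v₁, v₂)) = L₂ v₂) :=
  stmt9_general q₁ q₂ L₁ L₂ LW hq₁ hq₂ ε L hL
end

section
/- With the notation of the previous statement, additionally let π : V₁ → U be a bounded linear surjection onto a normed space U, and suppose the quotient of L₁ under π is a seminorm L_U. Then the quotient of L (defined on V₁ × V₂ as max(L₁(v₁), L₂(v₂), ε⁻¹‖q₁(v₁)−q₂(v₂)‖)) under the composition (v₁,v₂) ↦ π(v₁) equals L_U. -/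
open scoped ENNReal

/-- with the coupling seminorm L of the previous statement, and a further
bounded linear surjection π : V₁ → U under which the quotient of L₁ is L_U, the quotient
of L under (v₁,v₂) ↦ π v₁ equals L_U. -/
theorem stmt10 {V₁ V₂ W U : Type*}
    [NormedAddCommGroup V₁] [NormedSpace ℝ V₁]
    [NormedAddCommGroup V₂] [NormedSpace ℝ V₂]
    [NormedAddCommGroup W] [NormedSpace ℝ W]
    [NormedAddCommGroup U] [NormedSpace ℝ U]
    (q₁ : V₁ →L[ℝ] W) (q₂ : V₂ →L[ℝ] W)
    (hq₁s : Function.Surjective q₁) (hq₂s : Function.Surjective q₂)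
    (L₁ : V₁ → ℝ≥0∞) (L₂ : V₂ → ℝ≥0∞) (LW : W → ℝ≥0∞)
    (hq₁ : ∀ w : W, LW w = ⨅ v ∈ {v : V₁ | q₁ v = w}, L₁ v)
    (hq₂ : ∀ w : W, LW w = ⨅ v ∈ {v : V₂ | q₂ v = w}, L₂ v)
    (ε : ℝ) (hε : 0 < ε)
    (L : V₁ × V₂ → ℝ≥0∞)
    (hL : ∀ p : V₁ × V₂,
      L p = max (max (L₁ p.1) (L₂ p.2)) (ENNReal.ofReal (ε⁻¹ * ‖q₁ p.1 - q₂ p.2‖)))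
    (π : V₁ →L[ℝ] U) (hπs : Function.Surjective π)
    (LU : U → ℝ≥0∞)
    (hπq : ∀ u : U, LU u = ⨅ v ∈ {v : V₁ | π v = u}, L₁ v) :
    ∀ u : U, (⨅ p ∈ {p : V₁ × V₂ | π p.1 = u}, L p) = LU u := by
  intro u
  apply le_antisymm
  · rw [hπq]
    refine le_iInf fun v => le_iInf fun hv => ?_
    -- reduce to the bound via LW (q₁ v)
    have hLW : LW (q₁ v) ≤ L₁ v := by
      rw [hq₁]
      exact iInf_le_of_le v (iInf_le _ rfl)
    have key : (⨅ p ∈ {p : V₁ × V₂ | π p.1 = u}, L p)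
        ≤ L₁ v ⊔ ⨅ v₂ ∈ {v₂ : V₂ | q₂ v₂ = q₁ v}, L₂ v₂ := by
      have hdist : L₁ v ⊔ ⨅ v₂ ∈ {v₂ : V₂ | q₂ v₂ = q₁ v}, L₂ v₂
          = ⨅ v₂ ∈ {v₂ : V₂ | q₂ v₂ = q₁ v}, (L₁ v ⊔ L₂ v₂) := by
        simp_rw [sup_iInf_eq]
      rw [hdist]
      refine le_iInf fun v₂ => le_iInf fun hv₂ => ?_
      have hmem : (v, v₂) ∈ {p : V₁ × V₂ | π p.1 = u} := hv
      refine (iInf_le_of_le (v, v₂) (iInf_le _ hmem)).trans ?_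
      have hv₂' : q₂ v₂ = q₁ v := hv₂
      rw [hL]
      simp [hv₂']
    refine key.trans ?_
    rw [← hq₂]
    exact sup_le le_rfl hLW
  · rw [hπq]
    refine le_iInf fun p => le_iInf fun hp => ?_
    have h1 : (⨅ v ∈ {v : V₁ | π v = u}, L₁ v) ≤ L₁ p.1 := iInf_le_of_le p.1 (iInf_le _ hp)
    refine h1.trans ?_
    rw [hL]
    exact le_sup_of_le_left le_sup_left
end

section
/- Let S₁, S₂, S_B, S_E ⊆ S be subsets of a metric space (S, d) with d convex in each variable on a convex ambient set, arising as follows: every point of S is a convex combination tφ₁ + (1−t)φ₂ with φ₁ ∈ S₁, φ₂ ∈ S₂ and t ∈ [0,1]; Haus(S₁, S_B') ≤ e₁ where S_B' ⊆ S₁-side copy of S_B; any point of the S_B copy in S₁ is within ε of the corresponding point of the S_B copy in S₂; and Haus(S₂, S_E') ≤ e₂. If additionally every φ₂ ∈ S₂ is within e₂ of S_E', then every point of S is within e₁ + e₂ + ε of the convex hull of S_E'. Hence Haus(S, closure(convexHull S_E')) ≤ e₁ + e₂ + ε, and if S_E' is convex, Haus(S, S_E') ≤ e₁ + e₂ + ε.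 -/
private lemma dist_combo {E : Type*} [NormedAddCommGroup E] [NormedSpace ℝ E]
    (a b c d : E) {t : ℝ} (ht : 0 ≤ t) (ht1 : t ≤ 1) :
    dist (t • a + (1 - t) • b) (t • c + (1 - t) • d)
      ≤ t * dist a c + (1 - t) * dist b d := by
  have h : t • a + (1 - t) • b - (t • c + (1 - t) • d)
      = t • (a - c) + (1 - t) • (b - d) := by
    simp [smul_sub]; abel
  rw [dist_eq_norm, h]
  calc ‖t • (a - c) + (1 - t) • (b - d)‖
      ≤ ‖t • (a - c)‖ + ‖(1 - t) • (b - d)‖ := norm_add_le _ _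
    _ = t * dist a c + (1 - t) * dist b d := by
        rw [norm_smul, norm_smul, Real.norm_of_nonneg ht,
          Real.norm_of_nonneg (by linarith), dist_eq_norm, dist_eq_norm]

/-- abstract extent estimate for the composition of tunnels. Every point
of S (a convex combination of points of S₁ and S₂) lies within e₁ + e₂ + ε of the convex
hull of S_E'. -/
theorem stmt11 {E : Type*} [NormedAddCommGroup E] [NormedSpace ℝ E]
    (S S₁ S₂ SE' : Set E) {ι : Type*} (κ : ι → E × E)
    (hSne : S.Nonempty) (hSEne : SE'.Nonempty) (hSb : Bornology.IsBounded S)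
    (hSconv : Convex ℝ S) (hS₁ : S₁ ⊆ S) (hS₂ : S₂ ⊆ S) (hSE : SE' ⊆ S)
    (e₁ e₂ ε : ℝ)
    (hcomb : ∀ φ ∈ S, ∃ φ₁ ∈ S₁, ∃ φ₂ ∈ S₂, ∃ t ∈ Set.Icc (0:ℝ) 1,
      φ = t • φ₁ + (1 - t) • φ₂)
    (hκ₁ : ∀ i, (κ i).1 ∈ S₁) (hκ₂ : ∀ i, (κ i).2 ∈ S₂)
    (h₁ : ∀ φ₁ ∈ S₁, ∃ i, dist φ₁ (κ i).1 ≤ e₁)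
    (hκ : ∀ i, dist (κ i).1 (κ i).2 ≤ ε)
    (h₂ : ∀ φ₂ ∈ S₂, ∃ ψ ∈ SE', dist φ₂ ψ ≤ e₂) :
    (∀ φ ∈ S, ∃ ψ ∈ convexHull ℝ SE', dist φ ψ ≤ e₁ + e₂ + ε) ∧
    Metric.hausdorffDist S (closure (convexHull ℝ SE')) ≤ e₁ + e₂ + ε ∧
    (Convex ℝ SE' → IsClosed SE' → Metric.hausdorffDist S SE' ≤ e₁ + e₂ + ε) := by
  -- nonnegativity of the constants
  obtain ⟨φ₀, hφ₀⟩ := hSne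
  obtain ⟨φ₁₀, hφ₁₀, φ₂₀, hφ₂₀, -⟩ := hcomb φ₀ hφ₀
  obtain ⟨i₀, hi₀⟩ := h₁ φ₁₀ hφ₁₀
  have he₁ : 0 ≤ e₁ := le_trans dist_nonneg hi₀
  have hε : 0 ≤ ε := le_trans dist_nonneg (hκ i₀)
  obtain ⟨ψ₀, -, hψ₀⟩ := h₂ φ₂₀ hφ₂₀
  have he₂ : 0 ≤ e₂ := le_trans dist_nonneg hψ₀
  have hc : 0 ≤ e₁ + e₂ + ε := by linarith
  -- main estimate
  have main : ∀ φ ∈ S, ∃ ψ ∈ convexHull ℝ SE', dist φ ψ ≤ e₁ + e₂ + ε := by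
    intro φ hφ
    obtain ⟨φ₁, hφ₁, φ₂, hφ₂, t, ⟨ht0, ht1⟩, rfl⟩ := hcomb φ hφ
    obtain ⟨i, hi⟩ := h₁ φ₁ hφ₁
    obtain ⟨ψ₁, hψ₁, hdψ₁⟩ := h₂ (κ i).2 (hκ₂ i)
    obtain ⟨ψ₂, hψ₂, hdψ₂⟩ := h₂ φ₂ hφ₂
    refine ⟨t • ψ₁ + (1 - t) • ψ₂, ?_, ?_⟩
    · exact (convex_convexHull ℝ SE') (subset_convexHull ℝ SE' hψ₁)
        (subset_convexHull ℝ SE' hψ₂) ht0 (by linarith) (by ring)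
    · have h1 : dist φ₁ ψ₁ ≤ e₁ + e₂ + ε :=
        le_trans (dist_triangle4 φ₁ (κ i).1 (κ i).2 ψ₁) (by
          have := hκ i; linarith)
      have h2 : dist φ₂ ψ₂ ≤ e₁ + e₂ + ε := by linarith
      calc dist (t • φ₁ + (1 - t) • φ₂) (t • ψ₁ + (1 - t) • ψ₂)
          ≤ t * dist φ₁ ψ₁ + (1 - t) * dist φ₂ ψ₂ := dist_combo _ _ _ _ ht0 ht1
        _ ≤ t * (e₁ + e₂ + ε) + (1 - t) * (e₁ + e₂ + ε) := by
            gcongr <;> linarith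
        _ = e₁ + e₂ + ε := by ring
  refine ⟨main, ?_, ?_⟩
  · -- Hausdorff bound with closure of convex hull
    have hsub : convexHull ℝ SE' ⊆ S := convexHull_min hSE hSconv
    apply Metric.hausdorffDist_le_of_infDist hc
    · intro x hx
      obtain ⟨ψ, hψ, hd⟩ := main x hx
      exact le_trans (Metric.infDist_le_dist_of_mem (subset_closure hψ)) hd
    · intro x hx
      have hx' : x ∈ closure S := closure_mono hsub hx
      have : Metric.infDist x S = 0 := by
        rw [← Metric.infDist_closure]
        exact Metric.infDist_zero_of_mem hx'
      simpa [this] using hc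
  · intro hconv hcl
    apply Metric.hausdorffDist_le_of_infDist hc
    · intro x hx
      obtain ⟨ψ, hψ, hd⟩ := main x hx
      rw [hconv.convexHull_eq] at hψ
      exact le_trans (Metric.infDist_le_dist_of_mem hψ) hd
    · intro x hx
      have : x ∈ S := hSE hx
      simpa [Metric.infDist_zero_of_mem this] using hc
end
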